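/- arXiv:2008.12022 — 8 statements merged into one kernel-verified Lean document; each statement's English description precedes it below -/
import Mathlib

section
/- Let G be a connected finite simple graph on vertex set Fin n, and for each edge {i,j} let f_{ij} : ℝ → ℝ be odd, continuous, with 0 as its unique root (f_{ij}(y) = 0 ↔ y = 0), differentiable at 0 with f_{ij}'(0) < 0. If x : Fin n → ℝ satisfies ∑_{j adjacent to i} f_{ij}(x_i - x_j) = 0 for every vertex i (i.e. x is an equilibrium of the consensus dynamics), then x is a constant vector, i.e. x_i = x_j for all i, j. -/
/-- If g is continuous, has 0 as unique root, and negative derivative at 0,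
then g y < 0 for y > 0. -/
lemma neg_of_pos_aux (g : ℝ → ℝ) (hc : Continuous g)
    (hr : ∀ y : ℝ, g y = 0 ↔ y = 0)
    (c : ℝ) (hcneg : c < 0) (hd : HasDerivAt g c 0) :
    ∀ y : ℝ, 0 < y → g y < 0 := by
  intro y hy
  have hg0 : g 0 = 0 := (hr 0).mpr rfl
  -- find t ∈ (0, y) with g t < 0
  have hslope : Filter.Tendsto (slope g 0) (nhdsWithin 0 {(0:ℝ)}ᶜ) (nhds c) :=
    hasDerivAt_iff_tendsto_slope.mp hd
  have hslope' : Filter.Tendsto (slope g 0) (nhdsWithin 0 (Set.Ioi 0)) (nhds c) :=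
    hslope.mono_left (nhdsWithin_mono 0 (fun t ht => ne_of_gt ht))
  have hev : ∀ᶠ t in nhdsWithin 0 (Set.Ioi 0), slope g 0 t < 0 :=
    hslope' (Iio_mem_nhds hcneg)
  have hev2 : ∀ᶠ t in nhdsWithin (0:ℝ) (Set.Ioi 0), t ∈ Set.Ioo 0 y :=
    Ioo_mem_nhdsGT_of_mem ⟨le_refl 0, hy⟩
  obtain ⟨t, hts, hto⟩ := (hev.and hev2).exists
  have ht0 : 0 < t := hto.1
  have hgt : g t < 0 := by
    have : slope g 0 t = g t / t := by
      simp [slope, hg0, div_eq_inv_mul]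
    rw [this] at hts
    have := mul_neg_of_neg_of_pos hts ht0
    rwa [div_mul_cancel₀ _ (ne_of_gt ht0)] at this
  -- now suppose g y ≥ 0; g y ≠ 0 so g y > 0, IVT gives root in [t, y]
  by_contra h
  push_neg at h
  have hgy : 0 < g y := lt_of_le_of_ne h (fun he => (ne_of_gt hy) ((hr y).mp he.symm))
  have hty : t ≤ y := le_of_lt hto.2
  have := intermediate_value_Icc hty hc.continuousOn
  have h0mem : (0:ℝ) ∈ Set.Icc (g t) (g y) := ⟨le_of_lt hgt, le_of_lt hgy⟩
  obtain ⟨z, hz, hgz⟩ := this h0mem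
  have : z = 0 := (hr z).mp hgz
  exact absurd (this ▸ hz.1) (not_le.mpr ht0)

/-- On a connected graph, if every coupling function is odd, continuous,
has 0 as its unique root, and has negative derivative at 0, then every equilibrium
of the consensus dynamics is a consensus (constant) state. -/
theorem equilibrium_is_consensus (n : ℕ) (G : SimpleGraph (Fin n)) [DecidableRel G.Adj]
    (hconn : G.Connected)
    (f : Fin n → Fin n → ℝ → ℝ)
    (hsymm : ∀ i j : Fin n, f i j = f j i)
    (hodd : ∀ (i j : Fin n) (y : ℝ), G.Adj i j → f i j (-y) = -f i j y)
    (hcont : ∀ i j : Fin n, G.Adj i j → Continuous (f i j))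
    (hroot : ∀ (i j : Fin n) (y : ℝ), G.Adj i j → (f i j y = 0 ↔ y = 0))
    (hderiv : ∀ i j : Fin n, G.Adj i j → ∃ c : ℝ, c < 0 ∧ HasDerivAt (f i j) c 0)
    (x : Fin n → ℝ)
    (heq : ∀ i : Fin n, ∑ j ∈ G.neighborFinset i, f i j (x i - x j) = 0) :
    ∀ i j : Fin n, x i = x j := by
  -- sign lemma
  have hneg : ∀ i j : Fin n, G.Adj i j → ∀ y : ℝ, 0 < y → f i j y < 0 := by
    intro i j hij y hy
    obtain ⟨c, hcneg, hd⟩ := hderiv i j hij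
    exact neg_of_pos_aux (f i j) (hcont i j hij) (fun y => hroot i j y hij) c hcneg hd y hy
  -- step: at a max vertex, all neighbors equal
  have hstep : ∀ i : Fin n, (∀ k, x k ≤ x i) → ∀ j, G.Adj i j → x j = x i := by
    intro i hmax j hij
    have hnonpos : ∀ k ∈ G.neighborFinset i, f i k (x i - x k) ≤ 0 := by
      intro k hk
      have hadj : G.Adj i k := (G.mem_neighborFinset i k).mp hk
      rcases lt_or_eq_of_le (hmax k) with h | h
      · exact le_of_lt (hneg i k hadj _ (sub_pos.mpr h))
      · rw [h, sub_self]
        exact le_of_eq ((hroot i k 0 hadj).mpr rfl)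
    have hzero := (Finset.sum_eq_zero_iff_of_nonpos hnonpos).mp (heq i) j
      ((G.mem_neighborFinset i j).mpr hij)
    have : x i - x j = 0 := (hroot i j _ hij).mp hzero
    linarith
  -- pick a max vertex
  have hne : Nonempty (Fin n) := hconn.nonempty
  obtain ⟨i0, _, hmax'⟩ := Finset.exists_max_image (Finset.univ : Finset (Fin n)) x
    ⟨Classical.arbitrary (Fin n), Finset.mem_univ _⟩
  have hmax : ∀ k, x k ≤ x i0 := fun k => hmax' k (Finset.mem_univ k)
  -- walk induction
  have hwalk : ∀ (a b : Fin n) (_ : G.Walk a b), (∀ k, x k ≤ x a) → x b = x a := by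
    intro a b w
    induction w with
    | nil => intro _; rfl
    | @cons u v b' h p ih =>
      intro hm
      have hxv : x v = x u := hstep u hm v h
      have hm' : ∀ k, x k ≤ x v := fun k => hxv ▸ hm k
      rw [ih hm', hxv]
  intro i j
  obtain ⟨wi⟩ := hconn i0 i
  obtain ⟨wj⟩ := hconn i0 j
  rw [hwalk i0 i wi hmax, hwalk i0 j wj hmax]
end

section
/- Let G be a finite simple graph on Fin n with edge weights w (a real number w_e for each edge e), and let L(w) be the signed weighted Laplacian of (G, w). Suppose there exists a nonempty proper subset S of the vertices such that the sum of w_e over all edges e with one endpoint in S and the other in the complement of S is strictly positive. Then the symmetric matrix L(w) has a strictly positive eigenvalue. -/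
/-! For the indicator vector `x` of `S`, the quadratic form `xᵀ L(w) x` is the total weight of the
edges leaving `S`: every edge inside `S` contributes `w_e - w_e = 0`. A symmetric matrix whose
quadratic form takes a positive value is not negative semidefinite, so it has a positive
eigenvalue. -/

open Matrix

/-- The signed weighted Laplacian of a simple graph `G` on `Fin n` with real edge
weights `w` (with `w i j = w j i` on edges): off-diagonal entries are `-w i j` on
edges and `0` otherwise, diagonal entries are the sums of incident weights. -/
def signedLaplacian {n : ℕ} (G : SimpleGraph (Fin n)) [DecidableRel G.Adj]
    (w : Fin n → Fin n → ℝ) : Matrix (Fin n) (Fin n) ℝ :=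
  fun i j =>
    if i = j then ∑ k ∈ G.neighborFinset i, w i k
    else if G.Adj i j then -w i j else 0

open scoped ComplexOrder

namespace Matrix

variable {𝕜 ι : Type*} [RCLike 𝕜] [Fintype ι]

theorem IsHermitian.exists_pos_eigenvalue_of_re_dotProduct_mulVec_pos {A : Matrix ι ι 𝕜}
    (hA : A.IsHermitian) {x : ι → 𝕜} (hx : 0 < RCLike.re (star x ⬝ᵥ A *ᵥ x)) :
    ∃ μ : ℝ, 0 < μ ∧ ∃ v : ι → 𝕜, v ≠ 0 ∧ A *ᵥ v = μ • v := by
  classical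
  have hA' : (-A).IsHermitian := hA.neg
  by_cases hneg : ∃ i, hA'.eigenvalues i < 0
  · obtain ⟨i, hi⟩ := hneg
    refine ⟨-hA'.eigenvalues i, neg_pos.mpr hi, _,
      (WithLp.ofLp_eq_zero 2).ne.2 <| hA'.eigenvectorBasis.orthonormal.ne_zero i, ?_⟩
    rw [neg_smul, ← hA'.mulVec_eigenvectorBasis, neg_mulVec, neg_neg]
  · have hpsd : (-A).PosSemidef :=
      hA'.posSemidef_iff_eigenvalues_nonneg.mpr fun i => not_lt.mp fun hi => hneg ⟨i, hi⟩
    have := hpsd.re_dotProduct_nonneg x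
    rw [neg_mulVec, dotProduct_neg, map_neg] at this
    linarith

theorem indicator_dotProduct_mulVec_indicator {R : Type*} [NonAssocSemiring R]
    [DecidableEq ι] (A : Matrix ι ι R) (S : Finset ι) :
    (fun j => if j ∈ S then (1 : R) else 0) ⬝ᵥ A *ᵥ (fun j => if j ∈ S then (1 : R) else 0) =
      ∑ i ∈ S, ∑ j ∈ S, A i j := by
  simp [dotProduct, mulVec, Finset.sum_ite_mem]

end Matrix

section SignedLaplacian

variable {n : ℕ} (G : SimpleGraph (Fin n)) [DecidableRel G.Adj] (w : Fin n → Fin n → ℝ)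

theorem isHermitian_signedLaplacian (hsymm : ∀ i j, w i j = w j i) :
    (signedLaplacian G w).IsHermitian := by
  rw [isHermitian_iff_isSymm]
  ext i j
  rcases eq_or_ne i j with rfl | hij
  · rfl
  · simp [signedLaplacian, hij, hij.symm, G.adj_comm, hsymm j i]

theorem signedLaplacian_apply (i j : Fin n) :
    signedLaplacian G w i j =
      (if i = j then ∑ k ∈ G.neighborFinset i, w i k else 0) - if G.Adj i j then w i j else 0 := by
  unfold signedLaplacian
  split_ifs with hij hadj <;> simp_all

theorem sum_signedLaplacian_of_mem {S : Finset (Fin n)} {i : Fin n} (hi : i ∈ S) :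
    ∑ j ∈ S, signedLaplacian G w i j = ∑ j ∈ G.neighborFinset i with j ∉ S, w i j := by
  have hin : ∑ j ∈ S, (if G.Adj i j then w i j else 0) =
      ∑ j ∈ G.neighborFinset i with j ∈ S, w i j := by
    rw [← Finset.sum_filter]
    congr 1
    ext j
    simp [and_comm]
  simp only [signedLaplacian_apply, Finset.sum_sub_distrib, Finset.sum_ite_eq, if_pos hi, hin]
  rw [sub_eq_iff_eq_add', Finset.sum_filter_add_sum_filter_not]

end SignedLaplacian

theorem positive_cut_implies_positive_eigenvalue_general (n : ℕ)
    (G : SimpleGraph (Fin n)) [DecidableRel G.Adj]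
    (w : Fin n → Fin n → ℝ) (hsymm : ∀ i j : Fin n, w i j = w j i)
    (S : Finset (Fin n))
    (hcut : 0 < ∑ i ∈ S, ∑ j ∈ (G.neighborFinset i).filter (fun j => j ∉ S), w i j) :
    ∃ μ : ℝ, 0 < μ ∧ ∃ v : Fin n → ℝ, v ≠ 0 ∧ (signedLaplacian G w).mulVec v = μ • v := by
  refine (isHermitian_signedLaplacian G w hsymm).exists_pos_eigenvalue_of_re_dotProduct_mulVec_pos
    (x := fun j => if j ∈ S then 1 else 0) ?_
  rw [star_trivial, RCLike.re_to_real, indicator_dotProduct_mulVec_indicator,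
    Finset.sum_congr rfl fun i hi => sum_signedLaplacian_of_mem G w hi]
  exact hcut

/-- If the total weight of the edges across some nonempty proper vertex
cut is strictly positive, then the signed weighted Laplacian has a strictly positive
eigenvalue. -/
theorem positive_cut_implies_positive_eigenvalue (n : ℕ)
    (G : SimpleGraph (Fin n)) [DecidableRel G.Adj]
    (w : Fin n → Fin n → ℝ) (hsymm : ∀ i j : Fin n, w i j = w j i)
    (S : Finset (Fin n)) (hS : S.Nonempty) (hS' : S ≠ Finset.univ)
    (hcut : 0 < ∑ i ∈ S, ∑ j ∈ (G.neighborFinset i).filter (fun j => j ∉ S), w i j) :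
    ∃ μ : ℝ, 0 < μ ∧ ∃ v : Fin n → ℝ, v ≠ 0 ∧ (signedLaplacian G w).mulVec v = μ • v :=
  positive_cut_implies_positive_eigenvalue_general n G w hsymm S hcut
end

section
/- Let G be a connected finite simple graph on Fin n with strictly positive edge weights, and let L be its signed weighted Laplacian (which is then a standard positive semidefinite graph Laplacian). Fix two distinct vertices i ≠ j, let v : Fin n → ℝ satisfy L v = e_i - e_j (where e_i, e_j are standard basis vectors), and set r = v_i - v_j (the effective resistance between i and j). Let c > 0 and define the symmetric matrix J = c·(e_i - e_j)(e_i - e_j)ᵀ - L. Then: if c·r < 1, J is negative definite on mean-zero vectors, i.e. xᵀ J x < 0 for all nonzero x with ∑_k x_k = 0; and if c·r > 1, J has a strictly positive eigenvalue. -/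
/-
The form `x ↦ xᵀ L x` is `∑ w_ab (x_a - x_b)²` over edges, hence positive semidefinite, and on a
connected graph it vanishes only on constants; in particular it is positive on nonzero mean-zero
vectors. Write `u = e_i - e_j`, so `L v = u` and `r = vᵀ L v`. Then `xᵀ J x = c (xᵀ L v)² - xᵀ L x`,
and Cauchy–Schwarz for the form `L` gives `(xᵀ L v)² ≤ r · xᵀ L x`, so `c (xᵀ L v)² < xᵀ L x`
whenever `c r < 1` and `xᵀ L x > 0`. Conversely `vᵀ J v = r (c r - 1)`, and a symmetric matrix
with a positive value of its quadratic form has a positive eigenvalue. -/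

open Matrix

namespace Matrix

variable {ι : Type*} [Fintype ι] [DecidableEq ι]

theorem PosSemidef.sq_dotProduct_mulVec_le {A : Matrix ι ι ℝ} (hA : A.PosSemidef)
    (x y : ι → ℝ) : (x ⬝ᵥ A *ᵥ y) ^ 2 ≤ (x ⬝ᵥ A *ᵥ x) * (y ⬝ᵥ A *ᵥ y) := by
  simpa only [toBilin'_apply'] using A.toBilin'.apply_sq_le_of_symm
    (fun z => by simpa only [toBilin'_apply', star_trivial] using hA.dotProduct_mulVec_nonneg z)
    (LinearMap.BilinForm.isSymm_iff.1 <| isSymm_toBilin'_iff_isSymm.2 <|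
      isHermitian_iff_isSymm.1 hA.isHermitian) x y

theorem IsHermitian.exists_pos_eigenvalue_of_dotProduct_mulVec_pos
    {A : Matrix ι ι ℝ} (hA : A.IsHermitian) {x : ι → ℝ} (hx : 0 < x ⬝ᵥ A *ᵥ x) :
    ∃ μ : ℝ, 0 < μ ∧ ∃ z : ι → ℝ, z ≠ 0 ∧ A *ᵥ z = μ • z := by
  have hnot : ¬ (-A).PosSemidef := fun h => by
    have := h.dotProduct_mulVec_nonneg x
    rw [star_trivial, neg_mulVec, dotProduct_neg] at this
    linarith
  rw [posSemidef_iff_isHermitian_and_spectrum_nonneg, not_and, Set.not_subset] at hnot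
  obtain ⟨a, ha, ha_neg⟩ := hnot hA.neg
  rw [← spectrum.neg_eq, Set.mem_neg, ← spectrum_toLin',
    ← Module.End.hasEigenvalue_iff_mem_spectrum] at ha
  obtain ⟨z, hz⟩ := ha.exists_hasEigenvector
  exact ⟨-a, by simpa using ha_neg, z, hz.2, by simpa using hz.apply_eq_smul⟩

omit [DecidableEq ι] in
theorem dotProduct_smul_vecMulVec_sub_mulVec (A : Matrix ι ι ℝ) (c : ℝ) (u x : ι → ℝ) :
    x ⬝ᵥ (c • vecMulVec u u - A) *ᵥ x = c * (u ⬝ᵥ x) ^ 2 - x ⬝ᵥ A *ᵥ x := by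
  rw [sub_mulVec, smul_mulVec, vecMulVec_mulVec, dotProduct_sub, dotProduct_smul, op_smul_eq_smul,
    dotProduct_smul, dotProduct_comm x u, smul_eq_mul, smul_eq_mul]
  ring

variable {A : Matrix ι ι ℝ} {u v : ι → ℝ} {c : ℝ}

theorem PosSemidef.dotProduct_smul_vecMulVec_sub_mulVec_neg (hA : A.PosSemidef)
    (hv : A *ᵥ v = u) (hc : c * (v ⬝ᵥ u) < 1) {x : ι → ℝ} (hx : 0 < x ⬝ᵥ A *ᵥ x) :
    x ⬝ᵥ (c • vecMulVec u u - A) *ᵥ x < 0 := by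
  have hcs : (u ⬝ᵥ x) ^ 2 ≤ (x ⬝ᵥ A *ᵥ x) * (v ⬝ᵥ u) := by
    simpa only [hv, dotProduct_comm x u] using hA.sq_dotProduct_mulVec_le x v
  rw [dotProduct_smul_vecMulVec_sub_mulVec]
  rcases le_or_gt 0 c with hc₀ | hc₀
  · nlinarith [mul_le_mul_of_nonneg_left hcs hc₀]
  · nlinarith [sq_nonneg (u ⬝ᵥ x)]

theorem PosSemidef.exists_pos_eigenvalue_smul_vecMulVec_sub (hA : A.PosSemidef)
    (hv : A *ᵥ v = u) (hc : 1 < c * (v ⬝ᵥ u)) :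
    ∃ μ : ℝ, 0 < μ ∧ ∃ z : ι → ℝ, z ≠ 0 ∧ (c • vecMulVec u u - A) *ᵥ z = μ • z := by
  have hherm : (c • vecMulVec u u - A).IsHermitian := by
    rw [isHermitian_iff_isSymm]
    exact (IsSymm.smul (transpose_vecMulVec u u) c).sub (isHermitian_iff_isSymm.1 hA.isHermitian)
  refine hherm.exists_pos_eigenvalue_of_dotProduct_mulVec_pos (x := v) ?_
  have hr₀ : 0 ≤ v ⬝ᵥ u := by simpa [hv] using hA.dotProduct_mulVec_nonneg v
  have hr : 0 < v ⬝ᵥ u := lt_of_le_of_ne hr₀ fun h => by rw [← h, mul_zero] at hc; linarith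
  rw [dotProduct_smul_vecMulVec_sub_mulVec, hv, dotProduct_comm u]
  nlinarith [mul_pos hr (sub_pos.2 hc)]

end Matrix

section signedLaplacian

variable {n : ℕ} (G : SimpleGraph (Fin n)) [DecidableRel G.Adj] {w : Fin n → Fin n → ℝ}

theorem signedLaplacian_mulVec_apply (x : Fin n → ℝ) (a : Fin n) :
    (signedLaplacian G w *ᵥ x) a = ∑ b, if G.Adj a b then w a b * (x a - x b) else 0 := by
  have hentry : ∀ b, signedLaplacian G w a b * x b =
      (if a = b then (∑ k, if G.Adj a k then w a k else 0) * x b else 0)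
        - if G.Adj a b then w a b * x b else 0 := fun b => by
    rw [signedLaplacian, SimpleGraph.neighborFinset_eq_filter, Finset.sum_filter]
    by_cases hab : a = b
    · subst hab; simp
    · by_cases hadj : G.Adj a b <;> simp [hab, hadj]
  calc (signedLaplacian G w *ᵥ x) a = ∑ b, signedLaplacian G w a b * x b := rfl
    _ = (∑ k, if G.Adj a k then w a k else 0) * x a - ∑ b, if G.Adj a b then w a b * x b else 0 := by
      simp only [hentry, Finset.sum_sub_distrib, Finset.sum_ite_eq, Finset.mem_univ, if_true]
    _ = ∑ b, if G.Adj a b then w a b * (x a - x b) else 0 := by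
      rw [Finset.sum_mul, ← Finset.sum_sub_distrib]
      refine Finset.sum_congr rfl fun b _ => ?_
      split_ifs <;> ring

theorem isSymm_signedLaplacian (hsymm : ∀ a b, w a b = w b a) :
    (signedLaplacian G w).IsSymm := by
  refine IsSymm.ext fun a b => ?_
  by_cases hab : a = b
  · subst hab; rfl
  · simp only [signedLaplacian, if_neg hab, if_neg (Ne.symm hab), G.adj_comm a b, hsymm a b]

theorem two_mul_dotProduct_signedLaplacian_mulVec (hsymm : ∀ a b, w a b = w b a)
    (x : Fin n → ℝ) :
    2 * (x ⬝ᵥ signedLaplacian G w *ᵥ x)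
      = ∑ a, ∑ b ∈ G.neighborFinset a, w a b * (x a - x b) ^ 2 := by
  have hform : x ⬝ᵥ signedLaplacian G w *ᵥ x
      = ∑ a, ∑ b, if G.Adj a b then w a b * x a * (x a - x b) else 0 := by
    simp only [dotProduct, signedLaplacian_mulVec_apply, Finset.mul_sum, mul_ite, mul_zero,
      mul_left_comm (x _), mul_assoc]
  have hswap : x ⬝ᵥ signedLaplacian G w *ᵥ x
      = ∑ a, ∑ b, if G.Adj a b then w a b * x b * (x b - x a) else 0 := by
    rw [hform, Finset.sum_comm]
    simp only [G.adj_comm, hsymm]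
  simp only [SimpleGraph.neighborFinset_eq_filter, Finset.sum_filter]
  rw [two_mul]
  nth_rw 1 [hform]
  rw [hswap, ← Finset.sum_add_distrib]
  refine Finset.sum_congr rfl fun a _ => ?_
  rw [← Finset.sum_add_distrib]
  refine Finset.sum_congr rfl fun b _ => ?_
  split_ifs <;> ring

variable {G}

theorem posSemidef_signedLaplacian (hsymm : ∀ a b, w a b = w b a)
    (hpos : ∀ a b, G.Adj a b → 0 < w a b) : (signedLaplacian G w).PosSemidef := by
  refine PosSemidef.of_dotProduct_mulVec_nonneg
    (isHermitian_iff_isSymm.2 (isSymm_signedLaplacian G hsymm)) fun x => ?_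
  have h := two_mul_dotProduct_signedLaplacian_mulVec G hsymm x
  have : 0 ≤ ∑ a, ∑ b ∈ G.neighborFinset a, w a b * (x a - x b) ^ 2 :=
    Finset.sum_nonneg fun a _ => Finset.sum_nonneg fun b hb =>
      mul_nonneg (hpos a b ((G.mem_neighborFinset a b).1 hb)).le (sq_nonneg _)
  rw [star_trivial]
  linarith

theorem eq_of_adj_of_dotProduct_signedLaplacian_mulVec_eq_zero (hsymm : ∀ a b, w a b = w b a)
    (hpos : ∀ a b, G.Adj a b → 0 < w a b) {x : Fin n → ℝ}
    (hx : x ⬝ᵥ signedLaplacian G w *ᵥ x = 0) {a b : Fin n} (hab : G.Adj a b) : x a = x b := by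
  have h := two_mul_dotProduct_signedLaplacian_mulVec G hsymm x
  rw [hx, mul_zero, eq_comm] at h
  have hterm_nonneg : ∀ a, ∀ b ∈ G.neighborFinset a, 0 ≤ w a b * (x a - x b) ^ 2 := fun a b hb =>
    mul_nonneg (hpos a b ((G.mem_neighborFinset a b).1 hb)).le (sq_nonneg _)
  have hterm : w a b * (x a - x b) ^ 2 = 0 :=
    (Finset.sum_eq_zero_iff_of_nonneg (hterm_nonneg a)).1
      ((Finset.sum_eq_zero_iff_of_nonneg fun a _ => Finset.sum_nonneg (hterm_nonneg a)).1 h a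
        (Finset.mem_univ a)) b ((G.mem_neighborFinset a b).2 hab)
  rw [mul_eq_zero, or_iff_right (hpos a b hab).ne', sq_eq_zero_iff, sub_eq_zero] at hterm
  exact hterm

theorem eq_of_dotProduct_signedLaplacian_mulVec_eq_zero (hconn : G.Connected)
    (hsymm : ∀ a b, w a b = w b a) (hpos : ∀ a b, G.Adj a b → 0 < w a b) {x : Fin n → ℝ}
    (hx : x ⬝ᵥ signedLaplacian G w *ᵥ x = 0) (a b : Fin n) : x a = x b := by
  obtain ⟨p⟩ := hconn a b
  induction p with
  | nil => rfl
  | cons hadj _ ih =>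
    exact (eq_of_adj_of_dotProduct_signedLaplacian_mulVec_eq_zero hsymm hpos hx hadj).trans ih

theorem dotProduct_signedLaplacian_mulVec_pos (hconn : G.Connected)
    (hsymm : ∀ a b, w a b = w b a) (hpos : ∀ a b, G.Adj a b → 0 < w a b) {x : Fin n → ℝ}
    (hx : x ≠ 0) (hsum : ∑ k, x k = 0) : 0 < x ⬝ᵥ signedLaplacian G w *ᵥ x := by
  refine lt_of_le_of_ne ?_ fun h => hx (funext fun a => ?_)
  · simpa using (posSemidef_signedLaplacian hsymm hpos).dotProduct_mulVec_nonneg x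
  · have hconst := eq_of_dotProduct_signedLaplacian_mulVec_eq_zero hconn hsymm hpos h.symm
    rw [Finset.sum_congr rfl fun k _ => hconst k a, Finset.sum_const, Finset.card_univ,
      Fintype.card_fin, nsmul_eq_mul, mul_eq_zero] at hsum
    exact hsum.resolve_left (Nat.cast_ne_zero.2 a.pos.ne')

end signedLaplacian

theorem one_positive_edge_resistance_criterion_general (n : ℕ)
    (G : SimpleGraph (Fin n)) [DecidableRel G.Adj] (hconn : G.Connected)
    (w : Fin n → Fin n → ℝ) (hsymm : ∀ i j : Fin n, w i j = w j i)
    (hpos : ∀ i j : Fin n, G.Adj i j → 0 < w i j)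
    (i j : Fin n)
    (v : Fin n → ℝ)
    (hv : (signedLaplacian G w).mulVec v = Pi.single i 1 - Pi.single j 1)
    (c : ℝ) :
    (c * (v i - v j) < 1 →
      ∀ x : Fin n → ℝ, x ≠ 0 → ∑ k, x k = 0 →
        x ⬝ᵥ (c • vecMulVec (Pi.single i 1 - Pi.single j 1) (Pi.single i 1 - Pi.single j 1)
              - signedLaplacian G w).mulVec x < 0) ∧
    (1 < c * (v i - v j) →
      ∃ μ : ℝ, 0 < μ ∧ ∃ z : Fin n → ℝ, z ≠ 0 ∧
        (c • vecMulVec (Pi.single i 1 - Pi.single j 1) (Pi.single i 1 - Pi.single j 1)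
              - signedLaplacian G w).mulVec z = μ • z) := by
  have hL := posSemidef_signedLaplacian hsymm hpos
  have hr : v ⬝ᵥ (Pi.single i 1 - Pi.single j 1) = v i - v j := by
    simp only [dotProduct_sub, dotProduct_single, mul_one]
  refine ⟨fun hcr x hx hsum => ?_, fun hcr => ?_⟩
  · exact hL.dotProduct_smul_vecMulVec_sub_mulVec_neg hv (hr ▸ hcr)
      (dotProduct_signedLaplacian_mulVec_pos hconn hsymm hpos hx hsum)
  · exact hL.exists_pos_eigenvalue_smul_vecMulVec_sub hv (hr ▸ hcr)

/-- Effective-resistance stability criterion for a single positive edge: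
for J = c(e_i - e_j)(e_i - e_j)ᵀ - L with L the Laplacian of a connected positively
weighted graph, c > 0, and r = v_i - v_j the effective resistance (L v = e_i - e_j),
c·r < 1 implies J is negative definite on mean-zero vectors, and c·r > 1 implies J
has a strictly positive eigenvalue. -/
theorem one_positive_edge_resistance_criterion (n : ℕ)
    (G : SimpleGraph (Fin n)) [DecidableRel G.Adj] (hconn : G.Connected)
    (w : Fin n → Fin n → ℝ) (hsymm : ∀ i j : Fin n, w i j = w j i)
    (hpos : ∀ i j : Fin n, G.Adj i j → 0 < w i j)
    (i j : Fin n) (hij : i ≠ j)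
    (v : Fin n → ℝ)
    (hv : (signedLaplacian G w).mulVec v = Pi.single i 1 - Pi.single j 1)
    (c : ℝ) (hc : 0 < c) :
    (c * (v i - v j) < 1 →
      ∀ x : Fin n → ℝ, x ≠ 0 → ∑ k, x k = 0 →
        x ⬝ᵥ (c • vecMulVec (Pi.single i 1 - Pi.single j 1) (Pi.single i 1 - Pi.single j 1)
              - signedLaplacian G w).mulVec x < 0) ∧
    (1 < c * (v i - v j) →
      ∃ μ : ℝ, 0 < μ ∧ ∃ z : Fin n → ℝ, z ≠ 0 ∧
        (c • vecMulVec (Pi.single i 1 - Pi.single j 1) (Pi.single i 1 - Pi.single j 1)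
              - signedLaplacian G w).mulVec z = μ • z) :=
  one_positive_edge_resistance_criterion_general n G hconn w hsymm hpos i j v hv c
end

section
/- Let d be an n×m real matrix each of whose columns sums to zero (i.e. 𝟙ᵀ d = 0, where 𝟙 is the all-ones vector in ℝⁿ), let M be an m×m real diagonal matrix, and let d̃ be the (n-1)×m matrix obtained from d by deleting one row. Then the symmetric matrices d M dᵀ and d̃ M d̃ᵀ have the same number of strictly positive eigenvalues and the same number of strictly negative eigenvalues (counted with multiplicity). -/
open Matrix Finset QuadraticMap

/-!
Write `L = d M dᵀ` and `L̃ = d̃ M d̃ᵀ`. The numbers of positive and negative eigenvalues of a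
symmetric matrix are the signature `(sigPos, sigNeg)` of its quadratic form (Sylvester's law of
inertia), and the signature can only drop when a form is pulled back along a linear map. Since
`d̃ = R d` with `R` the row-selection matrix, and, because the columns of `d` sum to zero, also
`d = E d̃` (row `i₀` of `d` is minus the sum of the other rows), each of `L = E L̃ Eᵀ` and
`L̃ = R L Rᵀ` is a pullback of the other.
-/

section Signature

variable {𝕜 M M' : Type*} [Field 𝕜] [LinearOrder 𝕜] [AddCommGroup M] [AddCommGroup M']
  [Module 𝕜 M] [Module 𝕜 M'] [FiniteDimensional 𝕜 M] [FiniteDimensional 𝕜 M']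

lemma sigPos_comp_le (Q : QuadraticForm 𝕜 M') (f : M →ₗ[𝕜] M') :
    sigPos (Q.comp f) ≤ sigPos Q := by
  obtain ⟨V, hV, hpos⟩ := exists_finrank_eq_sigPos_and_posDef (Q.comp f)
  have hinj : Function.Injective (f ∘ₗ V.subtype) := by
    rw [← LinearMap.ker_eq_bot, Submodule.eq_bot_iff]
    intro v hv
    have hfv : f v = 0 := hv
    by_contra hv0
    simpa [hfv] using hpos v hv0
  rw [← hV, ← LinearMap.finrank_range_of_inj hinj]
  refine le_sigPos_of_posDef Q fun ⟨_, v, rfl⟩ hx => ?_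
  exact hpos v fun hv => hx (by simp [hv])

lemma sigNeg_comp_le (Q : QuadraticForm 𝕜 M') (f : M →ₗ[𝕜] M') :
    sigNeg (Q.comp f) ≤ sigNeg Q :=
  sigPos_comp_le (-Q) f

end Signature

section Congruence

variable {R p q r : Type*} [CommRing R]
  [Fintype p] [DecidableEq p] [Fintype q] [DecidableEq q] [Fintype r]

lemma toQuadraticForm'_mul_mul_transpose (A : Matrix q q R) (F : Matrix p q R) :
    (F * A * Fᵀ).toQuadraticForm' = A.toQuadraticForm'.comp (mulVecLin Fᵀ) := by
  ext x
  simp only [toQuadraticForm', LinearMap.BilinMap.toQuadraticMap_apply, toLinearMap₂'_apply',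
    QuadraticMap.comp_apply, mulVecLin_apply, ← mulVec_mulVec, dotProduct_mulVec _ F,
    mulVec_transpose]

lemma toQuadraticForm'_mul_mul_transpose_of_eq_mul {d : Matrix p r R} {d' : Matrix q r R}
    (D : Matrix r r R) {F : Matrix q p R} (h : d' = F * d) :
    (d' * D * d'ᵀ).toQuadraticForm' = (d * D * dᵀ).toQuadraticForm'.comp (mulVecLin Fᵀ) := by
  rw [h, ← toQuadraticForm'_mul_mul_transpose]
  simp only [transpose_mul, Matrix.mul_assoc]

variable {𝕜 : Type*} [Field 𝕜] [LinearOrder 𝕜]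

lemma sigPos_le_of_eq_mul {d : Matrix p r 𝕜} {d' : Matrix q r 𝕜} (D : Matrix r r 𝕜)
    {F : Matrix q p 𝕜} (h : d' = F * d) :
    sigPos (d' * D * d'ᵀ).toQuadraticForm' ≤ sigPos (d * D * dᵀ).toQuadraticForm' := by
  rw [toQuadraticForm'_mul_mul_transpose_of_eq_mul D h]
  exact sigPos_comp_le _ _

lemma sigNeg_le_of_eq_mul {d : Matrix p r 𝕜} {d' : Matrix q r 𝕜} (D : Matrix r r 𝕜)
    {F : Matrix q p 𝕜} (h : d' = F * d) :
    sigNeg (d' * D * d'ᵀ).toQuadraticForm' ≤ sigNeg (d * D * dᵀ).toQuadraticForm' := by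
  rw [toQuadraticForm'_mul_mul_transpose_of_eq_mul D h]
  exact sigNeg_comp_le _ _

end Congruence

namespace Matrix.IsHermitian

variable {n : Type*} [Fintype n] [DecidableEq n] {A : Matrix n n ℝ}

lemma dotProduct_mulVec_eq_weightedSumSquares (hA : A.IsHermitian) (x : n → ℝ) :
    x ⬝ᵥ A *ᵥ x = weightedSumSquares ℝ hA.eigenvalues
      (star (hA.eigenvectorUnitary : Matrix n n ℝ) *ᵥ x) := by
  conv_lhs => rw [hA.spectral_theorem]
  rw [RCLike.ofReal_real_eq_id, Unitary.conjStarAlgAut_apply, ← mulVec_mulVec, ← mulVec_mulVec,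
    dotProduct_mulVec, ← mulVec_transpose, star_eq_conjTranspose,
    conjTranspose_eq_transpose_of_trivial]
  simp [dotProduct, mulVec_diagonal, mul_left_comm]

lemma toQuadraticForm'_equivalent_weightedSumSquares (hA : A.IsHermitian) :
    A.toQuadraticForm'.Equivalent (weightedSumSquares ℝ hA.eigenvalues) :=
  ⟨{ UnitaryGroup.toLinearEquiv (star hA.eigenvectorUnitary) with
    map_app' x := by
      simp [toQuadraticForm', toLinearMap₂'_apply', UnitaryGroup.toLinearEquiv,
        hA.dotProduct_mulVec_eq_weightedSumSquares] }⟩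

lemma sigPos_toQuadraticForm' (hA : A.IsHermitian) :
    sigPos A.toQuadraticForm' = #{k | 0 < hA.eigenvalues k} := by
  rw [QuadraticForm.sigPos_of_equiv_weightedSumSquares
    hA.toQuadraticForm'_equivalent_weightedSumSquares]
  simp [Set.ncard_eq_toFinset_card']

lemma sigNeg_toQuadraticForm' (hA : A.IsHermitian) :
    sigNeg A.toQuadraticForm' = #{k | hA.eigenvalues k < 0} := by
  rw [QuadraticForm.sigNeg_of_equiv_weightedSumSquares
    hA.toQuadraticForm'_equivalent_weightedSumSquares]
  simp [Set.ncard_eq_toFinset_card']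

end Matrix.IsHermitian

lemma eq_mul_submatrix_succAbove_of_sum_eq_zero {R : Type*} [Ring R] {N m : ℕ}
    (d : Matrix (Fin (N + 1)) (Fin m) R) (hcol : ∀ e, ∑ i, d i e = 0) (i₀ : Fin (N + 1)) :
    d = of (Fin.insertNth i₀ (fun _ => -1 : Fin N → R) fun j => Pi.single j 1) *
      d.submatrix i₀.succAbove id := by
  ext i e
  refine Fin.succAboveCases i₀ ?_ (fun j => ?_) i
  · have hsum := Fin.sum_univ_succAbove (d · e) i₀
    simp only [hcol] at hsum
    simp [mul_apply, eq_neg_iff_add_eq_zero, ← hsum]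
  · simp [mul_apply, Pi.single_apply]

/-- If the columns of d each sum to zero and M = diagonal c, then
deleting one row of d does not change the number of strictly positive (resp.
strictly negative) eigenvalues of the symmetric matrix d M dᵀ. -/
theorem delete_row_preserves_signs (N m : ℕ)
    (d : Matrix (Fin (N + 1)) (Fin m) ℝ)
    (hcol : ∀ e : Fin m, ∑ i, d i e = 0)
    (c : Fin m → ℝ)
    (i₀ : Fin (N + 1))
    (dt : Matrix (Fin N) (Fin m) ℝ)
    (hdt : dt = d.submatrix i₀.succAbove id)
    (hH : (d * Matrix.diagonal c * dᵀ).IsHermitian)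
    (hHt : (dt * Matrix.diagonal c * dtᵀ).IsHermitian) :
    (univ.filter fun k => 0 < hH.eigenvalues k).card =
      (univ.filter fun k => 0 < hHt.eigenvalues k).card ∧
    (univ.filter fun k => hH.eigenvalues k < 0).card =
      (univ.filter fun k => hHt.eigenvalues k < 0).card := by
  have hd_eq_mul := hdt ▸ eq_mul_submatrix_succAbove_of_sum_eq_zero d hcol i₀
  have hdt_eq_mul :
      dt = (1 : Matrix (Fin (N + 1)) (Fin (N + 1)) ℝ).submatrix i₀.succAbove id * d := by
    simpa [hdt] using submatrix_mul 1 d i₀.succAbove id id Function.bijective_id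
  rw [← hH.sigPos_toQuadraticForm', ← hHt.sigPos_toQuadraticForm',
    ← hH.sigNeg_toQuadraticForm', ← hHt.sigNeg_toQuadraticForm']
  exact ⟨(sigPos_le_of_eq_mul _ hd_eq_mul).antisymm (sigPos_le_of_eq_mul _ hdt_eq_mul),
    (sigNeg_le_of_eq_mul _ hd_eq_mul).antisymm (sigNeg_le_of_eq_mul _ hdt_eq_mul)⟩
end

section
/- Let p be a nonzero real polynomial that is odd (p(-y) = -p(y) for all y ∈ ℝ), of degree k ≠ 1, having k distinct real roots. Let n be a positive integer with k ∣ n. Then the set S = { z : Fin n → ℝ | ∑_{i} z_i = 0 and there exists λ ∈ ℝ such that p(z_i) = λ for all i } is uncountable. -/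
/-!
Since `p` is odd and nonzero, its degree `k` is odd, so `k ≥ 3`, and the coefficient of
`X ^ (k - 1)` vanishes. The `k` distinct roots of `p` are simple, so `p` changes sign across each
of them; for every small level `l` the intermediate value theorem then gives `k` distinct
solutions of `p = l`, one near each root. They are all the roots of `p - l`, so by Vieta their
sum is `0`, and repeating them `n / k` times gives a point `z` of the set with `p (z i) = l`
for all `i`. Hence `z ↦ p (z 0)` maps the set onto an interval, which is uncountable.
-/

open Polynomial Finset Filter Topology

theorem Finset.exists_pos_forall_lt {α : Type*} (s : Finset α) {g : α → ℝ}
    (hg : ∀ a ∈ s, 0 < g a) : ∃ ε > 0, ∀ a ∈ s, ε < g a := by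
  have hsmall : ∀ᶠ ε in 𝓝[>] (0 : ℝ), 0 < ε ∧ ∀ a ∈ s, ε < g a :=
    eventually_mem_nhdsWithin.and <| (eventually_all_finset s).2 fun a ha =>
      nhdsWithin_le_nhds (eventually_lt_nhds (hg a ha))
  exact hsmall.exists

theorem Finset.prod_sub_mul_prod_add_sub_neg (s : Finset ℝ) {r δ : ℝ} (hr : r ∈ s)
    (hδ : 0 < δ) (hsep : ∀ x ∈ s, x ≠ r → δ < |x - r|) :
    (∏ x ∈ s, (r - δ - x)) * ∏ x ∈ s, (r + δ - x) < 0 := by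
  rw [← prod_mul_distrib, ← mul_prod_erase s _ hr]
  refine mul_neg_of_neg_of_pos (by nlinarith) (prod_pos fun x hx => ?_)
  obtain ⟨hxr, hxs⟩ := mem_erase.mp hx
  have hδx : δ ^ 2 < (x - r) ^ 2 :=
    sq_lt_sq.mpr (by rw [abs_of_pos hδ]; exact hsep x hxs hxr)
  nlinarith

theorem exists_mem_Ioo_eq_of_mul_neg {f : ℝ → ℝ} {a b l : ℝ} (hab : a ≤ b)
    (hf : ContinuousOn f (Set.Icc a b)) (hsign : f a * f b < 0)
    (ha : |l| < |f a|) (hb : |l| < |f b|) : ∃ x ∈ Set.Ioo a b, f x = l := by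
  have hl := neg_abs_le l
  have hl' := le_abs_self l
  rcases mul_neg_iff.mp hsign with ⟨hfa, hfb⟩ | ⟨hfa, hfb⟩
  · rw [abs_of_pos hfa] at ha
    rw [abs_of_neg hfb] at hb
    exact intermediate_value_Ioo' hab hf ⟨by linarith, by linarith⟩
  · rw [abs_of_neg hfa] at ha
    rw [abs_of_pos hfb] at hb
    exact intermediate_value_Ioo hab hf ⟨by linarith, by linarith⟩

namespace Polynomial

section Field

variable {K : Type*} [Field K]

theorem coeff_eq_zero_of_even_of_odd_eval [CharZero K] {p : K[X]}
    (hodd : ∀ y, p.eval (-y) = -p.eval y) {m : ℕ} (hm : Even m) : p.coeff m = 0 := by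
  have hcomp : p.comp (C (-1) * X) = -p := Polynomial.funext fun y => by simp [hodd]
  have hcoeff := congr_arg (coeff · m) hcomp
  simp only [comp_C_mul_X_coeff, hm.neg_one_pow, mul_one, coeff_neg] at hcoeff
  exact self_eq_neg.mp hcoeff

theorem odd_natDegree_of_odd_eval [CharZero K] {p : K[X]} (hp : p ≠ 0)
    (hodd : ∀ y, p.eval (-y) = -p.eval y) : Odd p.natDegree :=
  Nat.not_even_iff_odd.mp fun h =>
    leadingCoeff_ne_zero.mpr hp (coeff_eq_zero_of_even_of_odd_eval hodd h)

theorem eval_eq_leadingCoeff_mul_prod_roots [DecidableEq K] {p : K[X]}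
    (hroots : p.roots.toFinset.card = p.natDegree) (x : K) :
    p.eval x = p.leadingCoeff * ∏ a ∈ p.roots.toFinset, (x - a) := by
  have hcard : p.roots.card = p.natDegree :=
    le_antisymm (card_roots' p) (hroots ▸ Multiset.toFinset_card_le _)
  have hnodup : p.roots.Nodup :=
    Multiset.toFinset_card_eq_card_iff_nodup.mp (hroots.trans hcard.symm)
  conv_lhs => rw [(splits_iff_card_roots.mpr hcard).eq_prod_roots]
  rw [Finset.prod_eq_multiset_prod, Multiset.toFinset_val, hnodup.dedup]
  simp [eval_multiset_prod, Multiset.map_map]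

theorem roots_eq_map_of_injective {q : K[X]} (hq : q ≠ 0) {ι : Type*} [Fintype ι]
    {x : ι → K} (hx : Function.Injective x) (hroot : ∀ i, q.IsRoot (x i))
    (hcard : q.natDegree ≤ Fintype.card ι) : q.roots = univ.val.map x := by
  have hnodup : (univ.val.map x).Nodup := univ.nodup.map hx
  refine (Multiset.eq_of_le_of_card_le ((Multiset.le_iff_subset hnodup).mpr ?_) ?_).symm
  · intro a ha
    obtain ⟨i, -, rfl⟩ := Multiset.mem_map.mp ha
    exact (mem_roots hq).mpr (hroot i)
  · simpa using (card_roots' q).trans hcard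

theorem sum_eq_zero_of_injective_of_eval_eq {p : K[X]}
    (h2 : 2 ≤ p.natDegree) (hcoeff : p.coeff (p.natDegree - 1) = 0)
    {ι : Type*} [Fintype ι] (hcard : Fintype.card ι = p.natDegree) {x : ι → K}
    (hx : Function.Injective x) {l : K} (hl : ∀ i, p.eval (x i) = l) : ∑ i, x i = 0 := by
  set q := p - C l
  have hdeg : q.natDegree = p.natDegree := natDegree_sub_C
  have hq0 : q ≠ 0 := ne_zero_of_natDegree_gt (n := 0) (by omega)
  have hroots : q.roots = univ.val.map x :=
    roots_eq_map_of_injective hq0 hx (fun i => by simp [q, hl]) (hdeg.trans hcard.symm).le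
  have hsplit : q.Splits := splits_iff_card_roots.mpr (by simp [hroots, hdeg, hcard])
  -- `2 ≤ natDegree` keeps the constant `l` out of the coefficient of `X ^ (natDegree - 1)`.
  have hnext : q.nextCoeff = 0 := by
    rw [nextCoeff_of_natDegree_pos (by omega), hdeg, coeff_sub, coeff_C, if_neg (by omega),
      hcoeff, sub_zero]
  have hvieta := hsplit.nextCoeff_eq_neg_sum_roots_mul_leadingCoeff
  rw [hnext, hroots] at hvieta
  simpa [leadingCoeff_ne_zero.mpr hq0] using hvieta.symm

end Field

theorem eval_sub_mul_eval_add_neg {p : ℝ[X]} (hp : p ≠ 0)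
    (hroots : p.roots.toFinset.card = p.natDegree) {r δ : ℝ} (hr : r ∈ p.roots.toFinset)
    (hδ : 0 < δ) (hsep : ∀ x ∈ p.roots.toFinset, x ≠ r → δ < |x - r|) :
    p.eval (r - δ) * p.eval (r + δ) < 0 := by
  rw [eval_eq_leadingCoeff_mul_prod_roots hroots, eval_eq_leadingCoeff_mul_prod_roots hroots]
  have hc := leadingCoeff_ne_zero.mpr hp
  calc _ = p.leadingCoeff ^ 2 * ((∏ x ∈ p.roots.toFinset, (r - δ - x)) *
          ∏ x ∈ p.roots.toFinset, (r + δ - x)) := by ring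
    _ < 0 := mul_neg_of_pos_of_neg (by positivity) (prod_sub_mul_prod_add_sub_neg _ hr hδ hsep)

theorem exists_injective_eval_eq_of_abs_lt {p : ℝ[X]} (hp : p ≠ 0)
    (hroots : p.roots.toFinset.card = p.natDegree) :
    ∃ ε > 0, ∀ l, |l| < ε →
      ∃ x : p.roots.toFinset → ℝ, Function.Injective x ∧ ∀ r, p.eval (x r) = l := by
  set s := p.roots.toFinset
  obtain ⟨δ, hδ, hsep⟩ := s.offDiag.exists_pos_forall_lt (g := fun xy => |xy.1 - xy.2| / 2)
    fun xy hxy => half_pos (abs_pos.mpr (sub_ne_zero.mpr (mem_offDiag.mp hxy).2.2))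
  have hsep' : ∀ x ∈ s, ∀ y ∈ s, x ≠ y → 2 * δ < |x - y| := fun x hx y hy hxy => by
    have := hsep (x, y) (mem_offDiag.mpr ⟨hx, hy, hxy⟩)
    dsimp only at this
    linarith
  have hsign : ∀ r ∈ s, p.eval (r - δ) * p.eval (r + δ) < 0 := fun r hr =>
    eval_sub_mul_eval_add_neg hp hroots hr hδ fun x hx hxr => by linarith [hsep' x hx r hr hxr]
  obtain ⟨ε, hε, hεlt⟩ :=
    s.exists_pos_forall_lt (g := fun r => min |p.eval (r - δ)| |p.eval (r + δ)|)
      fun r hr => lt_min (abs_pos.mpr (left_ne_zero_of_mul (hsign r hr).ne))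
        (abs_pos.mpr (right_ne_zero_of_mul (hsign r hr).ne))
  refine ⟨ε, hε, fun l hl => ?_⟩
  have hlevel : ∀ r : s, ∃ x ∈ Set.Ioo (r - δ : ℝ) (r + δ), p.eval x = l := fun r =>
    exists_mem_Ioo_eq_of_mul_neg (by linarith) p.continuous.continuousOn (hsign r r.2)
      (hl.trans ((hεlt r r.2).trans_le (min_le_left _ _)))
      (hl.trans ((hεlt r r.2).trans_le (min_le_right _ _)))
  choose x hxmem hx using hlevel
  refine ⟨x, fun r r' hrr' => by_contra fun hne => ?_, hx⟩
  have hfar := hsep' r r.2 r' r'.2 (Subtype.coe_injective.ne hne)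
  have hr := hxmem r
  have hr' := hxmem r'
  rw [hrr'] at hr
  have hnear : |(r : ℝ) - r'| < 2 * δ :=
    abs_sub_lt_iff.mpr ⟨by linarith [hr.1, hr'.2], by linarith [hr.2, hr'.1]⟩
  linarith

end Polynomial

theorem exists_fin_sum_eq_nsmul {ι M : Type*} [Fintype ι] [AddCommMonoid M] (w : ι → M)
    {n : ℕ} (h : Fintype.card ι ∣ n) :
    ∃ z : Fin n → M, (∀ i, ∃ j, z i = w j) ∧ ∑ i, z i = (n / Fintype.card ι) • ∑ j, w j := by
  let e : Fin n ≃ Fin (n / Fintype.card ι) × ι :=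
    (finCongr (Nat.div_mul_cancel h).symm).trans
      (finProdFinEquiv.symm.trans ((Equiv.refl _).prodCongr (Fintype.equivFin ι).symm))
  refine ⟨fun i => w (e i).2, fun i => ⟨_, rfl⟩, ?_⟩
  rw [Fintype.sum_equiv e _ (fun x => w x.2) fun _ => rfl, Fintype.sum_prod_type]
  simp

/-- If p is a nonzero odd real polynomial of degree k ≠ 1 having k
distinct real roots, and k divides n, then the set of edge states z ∈ ℝⁿ with
∑ z_i = 0 and p(z_i) constant in i (the equilibria of the nonlinear consensus
dynamics on the cycle Cₙ) is uncountable. -/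
theorem cycle_continuum_of_equilibria (p : Polynomial ℝ) (hp : p ≠ 0)
    (hodd : ∀ y : ℝ, p.eval (-y) = -p.eval y)
    (hdeg : p.natDegree ≠ 1)
    (hroots : p.roots.toFinset.card = p.natDegree)
    (n : ℕ) (hn : 0 < n) (hdvd : p.natDegree ∣ n) :
    ¬ Set.Countable {z : Fin n → ℝ |
        (∑ i, z i) = 0 ∧ ∃ l : ℝ, ∀ i, p.eval (z i) = l} := by
  have hk_odd := odd_natDegree_of_odd_eval hp hodd
  have hk : 2 ≤ p.natDegree := by obtain ⟨m, hm⟩ := hk_odd; omega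
  have hcoeff := coeff_eq_zero_of_even_of_odd_eval hodd (Nat.Odd.sub_odd hk_odd odd_one)
  obtain ⟨ε, hε, hlevel⟩ := exists_injective_eval_eq_of_abs_lt hp hroots
  intro hS
  suffices hIoo : (Set.Ioo (-ε) ε).Countable from
    (Cardinal.Real.Ioo_countable_iff.mp hIoo).not_gt (neg_lt_self hε)
  refine (hS.image fun z => p.eval (z ⟨0, hn⟩)).mono fun l hl => ?_
  obtain ⟨x, hx, hxl⟩ := hlevel l (abs_lt.mpr hl)
  obtain ⟨z, hzx, hzsum⟩ := exists_fin_sum_eq_nsmul x (by simpa [hroots] using hdvd)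
  have hz : ∀ i, p.eval (z i) = l := fun i => by
    obtain ⟨j, hj⟩ := hzx i
    rw [hj, hxl]
  refine ⟨z, ⟨?_, l, hz⟩, hz _⟩
  rw [hzsum, sum_eq_zero_of_injective_of_eval_eq hk hcoeff (by simp [hroots]) hx hxl, smul_zero]
end

section
/- Let n ≥ 3, 1 ≤ n₀ ≤ n-1, and let c₀ > 0, c₁ < 0 be reals. Define the symmetric n×n real matrix J by: for i ≠ j, J_{ij} = -c₀ if i and j lie both among the first n₀ indices or both among the last n-n₀ indices, and J_{ij} = -c₁ otherwise; and the diagonal entries are determined by requiring every row of J to sum to zero (so J𝟙 = 0). Set a = c₀/(c₀ - c₁) and b = (-c₁)/(c₀ - c₁). Then: if a < n₀/n < b, J is negative definite on mean-zero vectors, i.e. xᵀ J x < 0 for every nonzero x with ∑_i x_i = 0; and if n₀/n < a or n₀/n > b, then J has a strictly positive eigenvalue. -/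
open Matrix

section Aux

variable {n n₀ : ℕ} {c₀ c₁ : ℝ} {J : Matrix (Fin n) (Fin n) ℝ}

/-- Pointwise formula for `J.mulVec x`. -/
lemma cgbs_key (hn₀ : 1 ≤ n₀) (hn₀n : n₀ < n)
    (hoff : ∀ i j : Fin n, i ≠ j →
      J i j = if (i.val < n₀ ∧ j.val < n₀) ∨ (n₀ ≤ i.val ∧ n₀ ≤ j.val)
        then -c₀ else -c₁)
    (hrow : ∀ i : Fin n, ∑ j, J i j = 0)
    (x : Fin n → ℝ) (i : Fin n) :
    J.mulVec x i =
      if i.val < n₀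
      then ((n₀:ℝ)*c₀ + ((n:ℝ)-(n₀:ℝ))*c₁) * x i
            - c₀ * (∑ j ∈ Finset.univ.filter (fun j : Fin n => j.val < n₀), x j)
            - c₁ * (∑ j ∈ Finset.univ.filter (fun j : Fin n => ¬ j.val < n₀), x j)
      else (((n:ℝ)-(n₀:ℝ))*c₀ + (n₀:ℝ)*c₁) * x i
            - c₀ * (∑ j ∈ Finset.univ.filter (fun j : Fin n => ¬ j.val < n₀), x j)
            - c₁ * (∑ j ∈ Finset.univ.filter (fun j : Fin n => j.val < n₀), x j) := by
  classical
  set A := Finset.univ.filter (fun j : Fin n => j.val < n₀) with hAdef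
  set B := Finset.univ.filter (fun j : Fin n => ¬ j.val < n₀) with hBdef
  have hcardA : A.card = n₀ := by
    have hAeq : A = Finset.Iio (⟨n₀, hn₀n⟩ : Fin n) := by
      ext j
      simp [hAdef, Finset.mem_Iio, Fin.lt_def]
    rw [hAeq, Fin.card_Iio]
  have hcardAB : A.card + B.card = n := by
    rw [hAdef, hBdef, Finset.card_filter_add_card_filter_not,
      Finset.card_univ, Fintype.card_fin]
  have hcardB : B.card = n - n₀ := by omega
  have hsplit : ∀ f : Fin n → ℝ, ∑ j ∈ A, f j + ∑ j ∈ B, f j = ∑ j, f j :=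
    fun f => Finset.sum_filter_add_sum_filter_not Finset.univ _ f
  have hmv : J.mulVec x i = ∑ j, J i j * x j := rfl
  have c2 : ((n - n₀ : ℕ):ℝ) = (n:ℝ) - (n₀:ℝ) := by rw [Nat.cast_sub hn₀n.le]
  by_cases hi : i.val < n₀
  · have hiA : i ∈ A := by simp [hAdef, hi]
    have dA : ∀ j ∈ A.erase i, J i j = -c₀ := by
      intro j hj
      obtain ⟨hji, hjA⟩ := Finset.mem_erase.mp hj
      have hjv : j.val < n₀ := by
        rw [hAdef] at hjA
        exact (Finset.mem_filter.mp hjA).2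
      rw [hoff i j (Ne.symm hji), if_pos (Or.inl ⟨hi, hjv⟩)]
    have dB : ∀ j ∈ B, J i j = -c₁ := by
      intro j hj
      have hjv : ¬ j.val < n₀ := by
        rw [hBdef] at hj
        exact (Finset.mem_filter.mp hj).2
      have hij : i ≠ j := by
        intro h
        exact hjv (h ▸ hi)
      rw [hoff i j hij, if_neg]
      rintro (⟨_, h2⟩ | ⟨h1, _⟩) <;> omega
    have eA : ∀ j ∈ A.erase i, J i j * x j = -c₀ * x j := fun j hj => by rw [dA j hj]
    have eB : ∀ j ∈ B, J i j * x j = -c₁ * x j := fun j hj => by rw [dB j hj]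
    have hdiag : J i i = c₀ * ((n₀:ℝ) - 1) + c₁ * ((n:ℝ) - (n₀:ℝ)) := by
      have h0 := hrow i
      rw [← hsplit (fun j => J i j), ← Finset.add_sum_erase A (fun j => J i j) hiA,
        Finset.sum_congr rfl dA, Finset.sum_congr rfl dB,
        Finset.sum_const, Finset.sum_const,
        Finset.card_erase_of_mem hiA, hcardA, hcardB] at h0
      have c1 : ((n₀ - 1 : ℕ):ℝ) = (n₀:ℝ) - 1 := by
        rw [Nat.cast_sub hn₀]; norm_num
      rw [nsmul_eq_mul, nsmul_eq_mul, c1, c2] at h0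
      linarith
    rw [hmv, ← hsplit (fun j => J i j * x j),
      ← Finset.add_sum_erase A (fun j => J i j * x j) hiA,
      Finset.sum_congr rfl eA, Finset.sum_congr rfl eB, hdiag, if_pos hi,
      ← Finset.mul_sum, ← Finset.mul_sum, Finset.sum_erase_eq_sub hiA]
    ring
  · have hiB : i ∈ B := by
      rw [hBdef]
      exact Finset.mem_filter.mpr ⟨Finset.mem_univ i, hi⟩
    have dB : ∀ j ∈ B.erase i, J i j = -c₀ := by
      intro j hj
      obtain ⟨hji, hjB⟩ := Finset.mem_erase.mp hj
      have hjv : ¬ j.val < n₀ := by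
        rw [hBdef] at hjB
        exact (Finset.mem_filter.mp hjB).2
      rw [hoff i j (Ne.symm hji), if_pos (Or.inr ⟨Nat.le_of_not_lt hi, Nat.le_of_not_lt hjv⟩)]
    have dA : ∀ j ∈ A, J i j = -c₁ := by
      intro j hj
      have hjv : j.val < n₀ := by
        rw [hAdef] at hj
        exact (Finset.mem_filter.mp hj).2
      have hij : i ≠ j := by
        intro h
        exact hi (h ▸ hjv)
      rw [hoff i j hij, if_neg]
      rintro (⟨h1, _⟩ | ⟨_, h2⟩) <;> omega
    have eB : ∀ j ∈ B.erase i, J i j * x j = -c₀ * x j := fun j hj => by rw [dB j hj]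
    have eA : ∀ j ∈ A, J i j * x j = -c₁ * x j := fun j hj => by rw [dA j hj]
    have hdiag : J i i = c₀ * (((n:ℝ) - (n₀:ℝ)) - 1) + c₁ * (n₀:ℝ) := by
      have h0 := hrow i
      rw [← hsplit (fun j => J i j), ← Finset.add_sum_erase B (fun j => J i j) hiB,
        Finset.sum_congr rfl dB, Finset.sum_congr rfl dA,
        Finset.sum_const, Finset.sum_const,
        Finset.card_erase_of_mem hiB, hcardA, hcardB] at h0
      have c1 : ((n - n₀ - 1 : ℕ):ℝ) = (n:ℝ) - (n₀:ℝ) - 1 := by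
        have h' : n - n₀ - 1 = n - (n₀ + 1) := by omega
        rw [h', Nat.cast_sub (by omega)]
        push_cast
        ring
      rw [nsmul_eq_mul, nsmul_eq_mul, c1] at h0
      linarith
    rw [hmv, ← hsplit (fun j => J i j * x j),
      ← Finset.add_sum_erase B (fun j => J i j * x j) hiB,
      Finset.sum_congr rfl eB, Finset.sum_congr rfl eA, hdiag, if_neg hi,
      ← Finset.mul_sum, ← Finset.mul_sum, Finset.sum_erase_eq_sub hiB]
    ring

/-- Quadratic form identity. -/
lemma cgbs_form (hn₀ : 1 ≤ n₀) (hn₀n : n₀ < n)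
    (hoff : ∀ i j : Fin n, i ≠ j →
      J i j = if (i.val < n₀ ∧ j.val < n₀) ∨ (n₀ ≤ i.val ∧ n₀ ≤ j.val)
        then -c₀ else -c₁)
    (hrow : ∀ i : Fin n, ∑ j, J i j = 0)
    (x : Fin n → ℝ) :
    x ⬝ᵥ J.mulVec x =
      ((n₀:ℝ)*c₀ + ((n:ℝ)-(n₀:ℝ))*c₁)
        * (∑ j ∈ Finset.univ.filter (fun j : Fin n => j.val < n₀), (x j)^2)
      + (((n:ℝ)-(n₀:ℝ))*c₀ + (n₀:ℝ)*c₁)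
        * (∑ j ∈ Finset.univ.filter (fun j : Fin n => ¬ j.val < n₀), (x j)^2)
      - (c₀ * (∑ j ∈ Finset.univ.filter (fun j : Fin n => j.val < n₀), x j)
          + c₁ * (∑ j ∈ Finset.univ.filter (fun j : Fin n => ¬ j.val < n₀), x j))
        * (∑ j ∈ Finset.univ.filter (fun j : Fin n => j.val < n₀), x j)
      - (c₀ * (∑ j ∈ Finset.univ.filter (fun j : Fin n => ¬ j.val < n₀), x j)
          + c₁ * (∑ j ∈ Finset.univ.filter (fun j : Fin n => j.val < n₀), x j))
        * (∑ j ∈ Finset.univ.filter (fun j : Fin n => ¬ j.val < n₀), x j) := by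
  classical
  set A := Finset.univ.filter (fun j : Fin n => j.val < n₀) with hAdef
  set B := Finset.univ.filter (fun j : Fin n => ¬ j.val < n₀) with hBdef
  set SA := ∑ j ∈ A, x j with hSAdef
  set SB := ∑ j ∈ B, x j with hSBdef
  have hsplit : ∀ f : Fin n → ℝ, ∑ j ∈ A, f j + ∑ j ∈ B, f j = ∑ j, f j :=
    fun f => Finset.sum_filter_add_sum_filter_not Finset.univ _ f
  have e1 : ∀ i ∈ A, x i * J.mulVec x i =
      ((n₀:ℝ)*c₀ + ((n:ℝ)-(n₀:ℝ))*c₁) * (x i)^2 - (c₀*SA + c₁*SB) * x i := by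
    intro i hiA
    have hi : i.val < n₀ := by
      rw [hAdef] at hiA
      exact (Finset.mem_filter.mp hiA).2
    rw [cgbs_key hn₀ hn₀n hoff hrow x i, if_pos hi]
    ring
  have e2 : ∀ i ∈ B, x i * J.mulVec x i =
      (((n:ℝ)-(n₀:ℝ))*c₀ + (n₀:ℝ)*c₁) * (x i)^2 - (c₀*SB + c₁*SA) * x i := by
    intro i hiB
    have hi : ¬ i.val < n₀ := by
      rw [hBdef] at hiB
      exact (Finset.mem_filter.mp hiB).2
    rw [cgbs_key hn₀ hn₀n hoff hrow x i, if_neg hi]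
    ring
  have hdot : x ⬝ᵥ J.mulVec x = ∑ i, x i * J.mulVec x i := rfl
  rw [hdot, ← hsplit (fun i => x i * J.mulVec x i),
    Finset.sum_congr rfl e1, Finset.sum_congr rfl e2,
    Finset.sum_sub_distrib, Finset.sum_sub_distrib,
    ← Finset.mul_sum, ← Finset.mul_sum, ← Finset.mul_sum, ← Finset.mul_sum]
  ring

/-- Eigenvector construction from a pair in the same block. -/
lemma cgbs_eig (hn₀ : 1 ≤ n₀) (hn₀n : n₀ < n)
    (hoff : ∀ i j : Fin n, i ≠ j →
      J i j = if (i.val < n₀ ∧ j.val < n₀) ∨ (n₀ ≤ i.val ∧ n₀ ≤ j.val)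
        then -c₀ else -c₁)
    (hrow : ∀ i : Fin n, ∑ j, J i j = 0)
    (p q : Fin n) (hpq : p ≠ q)
    (hblk : (p.val < n₀ ∧ q.val < n₀) ∨ (n₀ ≤ p.val ∧ n₀ ≤ q.val)) :
    J.mulVec (fun i => (if i = p then (1:ℝ) else 0) - if i = q then 1 else 0)
      = (if p.val < n₀ then (n₀:ℝ)*c₀ + ((n:ℝ)-(n₀:ℝ))*c₁
          else ((n:ℝ)-(n₀:ℝ))*c₀ + (n₀:ℝ)*c₁)
        • (fun i => (if i = p then (1:ℝ) else 0) - if i = q then 1 else 0) := by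
  classical
  set v := fun i : Fin n => (if i = p then (1:ℝ) else 0) - if i = q then 1 else 0 with hv
  funext i
  have hsum0 : ∀ P : Fin n → Prop, ∀ inst : DecidablePred P, (P p ↔ P q) →
      ∑ j ∈ Finset.univ.filter (fun j => P j), v j = 0 := by
    intro P inst hPQ
    rw [hv]
    rw [Finset.sum_sub_distrib, Finset.sum_ite_eq' _ p (fun _ => (1:ℝ)),
      Finset.sum_ite_eq' _ q (fun _ => (1:ℝ))]
    by_cases hP : P p
    · rw [if_pos (Finset.mem_filter.mpr ⟨Finset.mem_univ p, hP⟩),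
        if_pos (Finset.mem_filter.mpr ⟨Finset.mem_univ q, hPQ.mp hP⟩)]
      ring
    · rw [if_neg (fun hm => hP ((Finset.mem_filter.mp hm).2)),
        if_neg (fun hm => hP (hPQ.mpr (Finset.mem_filter.mp hm).2))]
      ring
  have hPQ : (p.val < n₀ ↔ q.val < n₀) := by
    rcases hblk with ⟨h1, h2⟩ | ⟨h1, h2⟩ <;> constructor <;> intro <;> omega
  have hSA : ∑ j ∈ Finset.univ.filter (fun j : Fin n => j.val < n₀), v j = 0 :=
    hsum0 _ _ hPQ
  have hSB : ∑ j ∈ Finset.univ.filter (fun j : Fin n => ¬ j.val < n₀), v j = 0 :=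
    hsum0 _ _ (not_iff_not.mpr hPQ)
  rw [cgbs_key hn₀ hn₀n hoff hrow v i]
  rw [hSA, hSB]
  simp only [Pi.smul_apply, smul_eq_mul, mul_zero, sub_zero]
  by_cases hi : i.val < n₀
  · rw [if_pos hi]
    by_cases hp : p.val < n₀
    · rw [if_pos hp]
    · rw [if_neg hp]
      have hip : i ≠ p := fun h => hp (h ▸ hi)
      have hiq : i ≠ q := by
        intro h
        rcases hblk with ⟨h1, _⟩ | ⟨_, h2⟩
        · exact hp h1
        · subst h; omega
      rw [hv]
      simp [hip, hiq]
  · rw [if_neg hi]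
    by_cases hp : p.val < n₀
    · rw [if_pos hp]
      have hip : i ≠ p := fun h => hi (h ▸ hp)
      have hiq : i ≠ q := by
        intro h
        rcases hblk with ⟨_, h2⟩ | ⟨h1, _⟩
        · subst h; omega
        · exact hi (by omega)
      rw [hv]
      simp [hip, hiq]
    · rw [if_neg hp]

lemma cgbs_eigA (hn₀ : 1 ≤ n₀) (hn₀n : n₀ < n)
    (hoff : ∀ i j : Fin n, i ≠ j →
      J i j = if (i.val < n₀ ∧ j.val < n₀) ∨ (n₀ ≤ i.val ∧ n₀ ≤ j.val)
        then -c₀ else -c₁)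
    (hrow : ∀ i : Fin n, ∑ j, J i j = 0)
    (p q : Fin n) (hpq : p ≠ q) (hp : p.val < n₀) (hq : q.val < n₀) :
    J.mulVec (fun i => (if i = p then (1:ℝ) else 0) - if i = q then 1 else 0)
      = ((n₀:ℝ)*c₀ + ((n:ℝ)-(n₀:ℝ))*c₁)
        • (fun i => (if i = p then (1:ℝ) else 0) - if i = q then 1 else 0) := by
  have h := cgbs_eig hn₀ hn₀n hoff hrow p q hpq (Or.inl ⟨hp, hq⟩)
  rwa [if_pos hp] at h

lemma cgbs_eigB (hn₀ : 1 ≤ n₀) (hn₀n : n₀ < n)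
    (hoff : ∀ i j : Fin n, i ≠ j →
      J i j = if (i.val < n₀ ∧ j.val < n₀) ∨ (n₀ ≤ i.val ∧ n₀ ≤ j.val)
        then -c₀ else -c₁)
    (hrow : ∀ i : Fin n, ∑ j, J i j = 0)
    (p q : Fin n) (hpq : p ≠ q) (hp : n₀ ≤ p.val) (hq : n₀ ≤ q.val) :
    J.mulVec (fun i => (if i = p then (1:ℝ) else 0) - if i = q then 1 else 0)
      = (((n:ℝ)-(n₀:ℝ))*c₀ + (n₀:ℝ)*c₁)
        • (fun i => (if i = p then (1:ℝ) else 0) - if i = q then 1 else 0) := by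
  have h := cgbs_eig hn₀ hn₀n hoff hrow p q hpq (Or.inr ⟨hp, hq⟩)
  rwa [if_neg (Nat.not_lt.mpr hp)] at h

end Aux

set_option maxHeartbeats 1600000 in
/-- Stability of the block equilibria on the complete graph Kₙ.
J has off-diagonal entries -c₀ within the first n₀ indices and within the last
n - n₀ indices, -c₁ across, and zero row sums, with c₀ > 0 > c₁. With
a = c₀/(c₀-c₁) and b = -c₁/(c₀-c₁): if a < n₀/n < b then J is negative definite
on mean-zero vectors; if n₀/n < a or n₀/n > b then J has a positive eigenvalue. -/
theorem complete_graph_block_stability (n n₀ : ℕ)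
    (hn : 3 ≤ n) (hn₀ : 1 ≤ n₀) (hn₀' : n₀ ≤ n - 1)
    (c₀ c₁ : ℝ) (hc₀ : 0 < c₀) (hc₁ : c₁ < 0)
    (J : Matrix (Fin n) (Fin n) ℝ)
    (hoff : ∀ i j : Fin n, i ≠ j →
      J i j = if (i.val < n₀ ∧ j.val < n₀) ∨ (n₀ ≤ i.val ∧ n₀ ≤ j.val)
        then -c₀ else -c₁)
    (hrow : ∀ i : Fin n, ∑ j, J i j = 0) :
    ((c₀ / (c₀ - c₁) < (n₀ : ℝ) / n ∧ (n₀ : ℝ) / n < -c₁ / (c₀ - c₁)) →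
      ∀ x : Fin n → ℝ, x ≠ 0 → ∑ i, x i = 0 → x ⬝ᵥ J.mulVec x < 0) ∧
    (((n₀ : ℝ) / n < c₀ / (c₀ - c₁) ∨ -c₁ / (c₀ - c₁) < (n₀ : ℝ) / n) →
      ∃ μ : ℝ, 0 < μ ∧ ∃ v : Fin n → ℝ, v ≠ 0 ∧ J.mulVec v = μ • v) := by
  classical
  have hn₀n : n₀ < n := by omega
  have hnR : (0:ℝ) < (n:ℝ) := by
    have : 0 < n := by omega
    exact_mod_cast this
  have hc : (0:ℝ) < c₀ - c₁ := by linarith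
  constructor
  · rintro ⟨h1, h2⟩ x hx hsum
    have hlA : (n₀:ℝ)*c₀ + ((n:ℝ)-(n₀:ℝ))*c₁ < 0 := by
      rw [div_lt_div_iff₀ hnR hc] at h2
      nlinarith
    have hlB : ((n:ℝ)-(n₀:ℝ))*c₀ + (n₀:ℝ)*c₁ < 0 := by
      rw [div_lt_div_iff₀ hc hnR] at h1
      nlinarith
    rw [cgbs_form hn₀ hn₀n hoff hrow x]
    set A := Finset.univ.filter (fun j : Fin n => j.val < n₀) with hAdef
    set B := Finset.univ.filter (fun j : Fin n => ¬ j.val < n₀) with hBdef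
    set SA := ∑ j ∈ A, x j with hSAdef
    set SB := ∑ j ∈ B, x j with hSBdef
    set QA := ∑ j ∈ A, (x j)^2 with hQAdef
    set QB := ∑ j ∈ B, (x j)^2 with hQBdef
    have hQA : 0 ≤ QA := Finset.sum_nonneg fun i _ => sq_nonneg _
    have hQB : 0 ≤ QB := Finset.sum_nonneg fun i _ => sq_nonneg _
    have hQ : 0 < QA + QB := by
      have hQsum : QA + QB = ∑ i, (x i)^2 :=
        Finset.sum_filter_add_sum_filter_not Finset.univ _ _
      rw [hQsum]
      obtain ⟨i, hi⟩ := Function.ne_iff.mp hx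
      exact Finset.sum_pos' (fun j _ => sq_nonneg _)
        ⟨i, Finset.mem_univ i, by
          have hi' : x i ≠ 0 := hi
          positivity⟩
    have hS : SA + SB = 0 := by
      have : SA + SB = ∑ i, x i :=
        Finset.sum_filter_add_sum_filter_not Finset.univ _ _
      rw [this, hsum]
    have hSB' : SB = -SA := by linarith
    rw [hSB']
    rcases eq_or_lt_of_le hQA with hQA0 | hQApos
    · have hQBpos : 0 < QB := by linarith
      nlinarith [mul_nonneg hc.le (sq_nonneg SA),
        mul_neg_of_neg_of_pos hlB hQBpos]
    · nlinarith [mul_nonneg hc.le (sq_nonneg SA),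
        mul_neg_of_neg_of_pos hlA hQApos,
        mul_nonpos_of_nonpos_of_nonneg hlB.le hQB]
  · have hvne : ∀ p q : Fin n, p ≠ q →
        (fun i => (if i = p then (1:ℝ) else 0) - if i = q then 1 else 0) ≠ 0 := by
      intro p q hpq h
      have := congrFun h p
      simp [hpq] at this
    rintro (h1 | h2)
    · have hlBpos : 0 < ((n:ℝ)-(n₀:ℝ))*c₀ + (n₀:ℝ)*c₁ := by
        rw [div_lt_div_iff₀ hnR hc] at h1
        nlinarith
      by_cases h2n : 2 ≤ n - n₀
      · exact ⟨((n:ℝ)-(n₀:ℝ))*c₀ + (n₀:ℝ)*c₁, hlBpos, _,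
          hvne ⟨n₀, by omega⟩ ⟨n₀+1, by omega⟩
            (Fin.ne_of_val_ne (show n₀ ≠ n₀ + 1 by omega)),
          cgbs_eigB hn₀ hn₀n hoff hrow ⟨n₀, by omega⟩ ⟨n₀+1, by omega⟩
            (Fin.ne_of_val_ne (show n₀ ≠ n₀ + 1 by omega))
            (show n₀ ≤ n₀ by omega) (show n₀ ≤ n₀ + 1 by omega)⟩
      · have hn₀2 : 2 ≤ n₀ := by omega
        have hn₀R : (n₀:ℝ) = (n:ℝ) - 1 := by
          have h' : n₀ + 1 = n := by omega
          have := congrArg (fun k : ℕ => (k:ℝ)) h'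
          push_cast at this
          linarith
        have hlApos : 0 < (n₀:ℝ)*c₀ + ((n:ℝ)-(n₀:ℝ))*c₁ := by
          rw [hn₀R] at hlBpos ⊢
          have hn3 : (3:ℝ) ≤ (n:ℝ) := by exact_mod_cast hn
          nlinarith [mul_pos (show (0:ℝ) < (n:ℝ)-1 by linarith) hlBpos,
            mul_pos (neg_pos.mpr hc₁) (show (0:ℝ) < ((n:ℝ)-1)^2 - 1 by nlinarith)]
        exact ⟨(n₀:ℝ)*c₀ + ((n:ℝ)-(n₀:ℝ))*c₁, hlApos, _,
          hvne ⟨0, by omega⟩ ⟨1, by omega⟩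
            (Fin.ne_of_val_ne (show 0 ≠ 1 by omega)),
          cgbs_eigA hn₀ hn₀n hoff hrow ⟨0, by omega⟩ ⟨1, by omega⟩
            (Fin.ne_of_val_ne (show 0 ≠ 1 by omega))
            (show 0 < n₀ by omega) (show 1 < n₀ by omega)⟩
    · have hlApos : 0 < (n₀:ℝ)*c₀ + ((n:ℝ)-(n₀:ℝ))*c₁ := by
        rw [div_lt_div_iff₀ hc hnR] at h2
        nlinarith
      by_cases h2n : 2 ≤ n₀
      · exact ⟨(n₀:ℝ)*c₀ + ((n:ℝ)-(n₀:ℝ))*c₁, hlApos, _,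
          hvne ⟨0, by omega⟩ ⟨1, by omega⟩
            (Fin.ne_of_val_ne (show 0 ≠ 1 by omega)),
          cgbs_eigA hn₀ hn₀n hoff hrow ⟨0, by omega⟩ ⟨1, by omega⟩
            (Fin.ne_of_val_ne (show 0 ≠ 1 by omega))
            (show 0 < n₀ by omega) (show 1 < n₀ by omega)⟩
      · have hn₀R : (n₀:ℝ) = 1 := by
          have h' : n₀ = 1 := by omega
          rw [h']
          norm_num
        have hlBpos : 0 < ((n:ℝ)-(n₀:ℝ))*c₀ + (n₀:ℝ)*c₁ := by
          rw [hn₀R] at hlApos ⊢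
          have hn3 : (3:ℝ) ≤ (n:ℝ) := by exact_mod_cast hn
          nlinarith [mul_pos (show (0:ℝ) < (n:ℝ)-1 by linarith) hlApos,
            mul_pos (neg_pos.mpr hc₁) (show (0:ℝ) < ((n:ℝ)-1)^2 - 1 by nlinarith)]
        exact ⟨((n:ℝ)-(n₀:ℝ))*c₀ + (n₀:ℝ)*c₁, hlBpos, _,
          hvne ⟨1, by omega⟩ ⟨2, by omega⟩
            (Fin.ne_of_val_ne (show 1 ≠ 2 by omega)),
          cgbs_eigB hn₀ hn₀n hoff hrow ⟨1, by omega⟩ ⟨2, by omega⟩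
            (Fin.ne_of_val_ne (show 1 ≠ 2 by omega))
            (show n₀ ≤ 1 by omega) (show n₀ ≤ 2 by omega)⟩
end

section
/- Let n ≥ 3, 1 ≤ n₀ ≤ n-1, and let c₀, c₁ be reals. Define the symmetric n×n real matrix J by: for i ≠ j, J_{ij} = -c₀ if i and j lie both among the first n₀ indices or both among the last n-n₀ indices, and J_{ij} = -c₁ otherwise; and the diagonal entries are determined by requiring every row of J to sum to zero. Then the multiset of eigenvalues of J (with multiplicity) is: 0 with multiplicity 1, c₁·n with multiplicity 1, (c₀ - c₁)·n₀ + c₁·n with multiplicity n₀ - 1, and (c₁ - c₀)·n₀ + c₀·n with multiplicity n - n₀ - 1. -/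
/-!
Split off the diagonal: `J = diagonal μ - B`, where `B` has entry `c₀` within a block (diagonal
included) and `c₁` across, and `μ i` is the row sum of `B`, which only depends on the block of `i`.
The coupling `B = U C Uᵀ` has rank two, `U` being the two block indicator vectors and
`C = !![c₀, c₁; c₁, c₀]`. For `x` outside the two values of `μ`, the Weinstein–Aronszajn identity
turns `det (x - J) = det (D + U C Uᵀ)` with `D = diagonal (x - μ)` into `det D` times a `2 × 2`
determinant, which factors as `x (x - c₁ n)`. This pins down the characteristic polynomial, whose
roots are the eigenvalues of the Hermitian matrix `J`.
-/

open Matrix Polynomial Finset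

namespace Matrix

variable {ι : Type*} (p : ι → Prop) [DecidablePred p] (c₀ c₁ : ℝ)

def blockCoupling : Matrix ι ι ℝ := of fun i j => if (p i ↔ p j) then c₀ else c₁

def blockIndicator : Matrix ι (Fin 2) ℝ :=
  of fun i => ![if p i then 1 else 0, if p i then 0 else 1]

theorem blockCoupling_eq_mul :
    blockCoupling p c₀ c₁ = blockIndicator p * !![c₀, c₁; c₁, c₀] * (blockIndicator p)ᵀ := by
  ext i j
  by_cases hi : p i <;> by_cases hj : p j <;>
    simp [blockCoupling, blockIndicator, mul_apply, Fin.sum_univ_two, hi, hj]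

variable [Fintype ι]

theorem sum_blockCoupling (i : ι) :
    ∑ j, blockCoupling p c₀ c₁ i j = if p i then c₀ * #{j | p j} + c₁ * #{j | ¬p j}
      else c₀ * #{j | ¬p j} + c₁ * #{j | p j} := by
  by_cases hi : p i <;> simp [blockCoupling, hi, sum_ite, mul_comm, add_comm]

variable [DecidableEq ι]

theorem eq_diagonal_sub_blockCoupling {J : Matrix ι ι ℝ}
    (hoff : ∀ i j, i ≠ j → J i j = -blockCoupling p c₀ c₁ i j)
    (hrow : ∀ i, ∑ j, J i j = 0) :
    J = diagonal (fun i => ∑ j, blockCoupling p c₀ c₁ i j) - blockCoupling p c₀ c₁ := by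
  have hJ : J = diagonal (fun i => J i i + c₀) - blockCoupling p c₀ c₁ := by
    ext i j
    rcases eq_or_ne i j with rfl | hij
    · simp [blockCoupling]
    · simp [hoff i j hij, hij]
  suffices hdiag : ∀ i, J i i + c₀ = ∑ j, blockCoupling p c₀ c₁ i j by
    simpa only [hdiag] using hJ
  intro i
  have hsum := hrow i
  rw [hJ] at hsum
  simpa [sub_apply, sum_sub_distrib, diagonal_apply, sub_eq_zero] using hsum

theorem blockIndicator_transpose_mul_diagonal_mul (s t : ℝ) :
    (blockIndicator p)ᵀ * diagonal (fun i => if p i then s else t) * blockIndicator p =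
      (!![#{i | p i} * s, 0; 0, #{i | ¬p i} * t] : Matrix (Fin 2) (Fin 2) ℝ) := by
  ext k l
  rw [mul_apply]
  fin_cases k <;> fin_cases l <;>
    simp [blockIndicator, mul_diagonal, sum_ite, filter_filter]

theorem det_diagonal_add_blockCoupling {y z : ℝ} (hy : y ≠ 0) (hz : z ≠ 0)
    (ha : 1 ≤ #{i | p i}) (hb : 1 ≤ #{i | ¬p i}) :
    (diagonal (fun i => if p i then y else z) + blockCoupling p c₀ c₁).det =
      y ^ (#{i | p i} - 1) * z ^ (#{i | ¬p i} - 1) *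
        ((y + c₀ * #{i | p i}) * (z + c₀ * #{i | ¬p i}) - c₁ ^ 2 * #{i | p i} * #{i | ¬p i}) := by
  have hunit : IsUnit (diagonal (fun i => if p i then y else z)).det := by
    simp [isUnit_iff_ne_zero, prod_ite, hy, hz]
  have hinv : (diagonal (fun i => if p i then y else z))⁻¹ =
      diagonal (fun i => if p i then y⁻¹ else z⁻¹) := by
    refine inv_eq_left_inv ?_
    rw [diagonal_mul_diagonal, ← diagonal_one]
    congr 1
    ext i
    split_ifs <;> simp [*]
  rw [blockCoupling_eq_mul, Matrix.mul_assoc, det_add_mul _ _ hunit, hinv, Matrix.mul_assoc,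
    Matrix.mul_assoc, ← Matrix.mul_assoc _ (diagonal _), blockIndicator_transpose_mul_diagonal_mul,
    det_diagonal, prod_ite]
  obtain ⟨a, ha⟩ := Nat.exists_eq_add_of_le' ha
  obtain ⟨b, hb⟩ := Nat.exists_eq_add_of_le' hb
  rw [one_fin_two]
  simp [ha, hb, pow_succ]
  field_simp

theorem charpoly_eq_of_blockCoupling {J : Matrix ι ι ℝ}
    (hoff : ∀ i j, i ≠ j → J i j = -blockCoupling p c₀ c₁ i j)
    (hrow : ∀ i, ∑ j, J i j = 0) (ha : 1 ≤ #{i | p i}) (hb : 1 ≤ #{i | ¬p i}) :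
    J.charpoly = ((0 ::ₘ c₁ * Fintype.card ι ::ₘ
      (Multiset.replicate (#{i | p i} - 1) (c₀ * #{i | p i} + c₁ * #{i | ¬p i}) +
       Multiset.replicate (#{i | ¬p i} - 1) (c₀ * #{i | ¬p i} + c₁ * #{i | p i}))).map
        (fun μ => X - C μ)).prod := by
  set μin := c₀ * #{i | p i} + c₁ * #{i | ¬p i}
  set μout := c₀ * #{i | ¬p i} + c₁ * #{i | p i}
  apply eq_of_infinite_eval_eq
  refine (Set.toFinite {μin, μout}).infinite_compl.mono fun x hx => ?_
  have hxin : x - μin ≠ 0 := sub_ne_zero.2 fun h => hx (by simp [h])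
  have hxout : x - μout ≠ 0 := sub_ne_zero.2 fun h => hx (by simp [h])
  have hshift : scalar ι x - J =
      diagonal (fun i => if p i then x - μin else x - μout) + blockCoupling p c₀ c₁ := by
    rw [eq_diagonal_sub_blockCoupling p c₀ c₁ hoff hrow]
    ext i j
    by_cases hi : p i <;> simp [sum_blockCoupling, diagonal_apply, hi, μin, μout] <;>
      split_ifs <;> ring
  have hcard : (Fintype.card ι : ℝ) = #{i | p i} + #{i | ¬p i} := by
    rw [← card_univ, ← card_filter_add_card_filter_not (s := univ) p, Nat.cast_add]
  rw [Set.mem_ofPred_eq, eval_charpoly, hshift,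
    det_diagonal_add_blockCoupling p c₀ c₁ hxin hxout ha hb]
  simp [hcard]
  ring

end Matrix

theorem complete_graph_block_spectrum_general (n n₀ : ℕ)
    (hn₀ : 1 ≤ n₀) (hn₀' : n₀ ≤ n - 1)
    (c₀ c₁ : ℝ)
    (J : Matrix (Fin n) (Fin n) ℝ)
    (hoff : ∀ i j : Fin n, i ≠ j →
      J i j = if (i.val < n₀ ∧ j.val < n₀) ∨ (n₀ ≤ i.val ∧ n₀ ≤ j.val)
        then -c₀ else -c₁)
    (hrow : ∀ i : Fin n, ∑ j, J i j = 0)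
    (hJ : J.IsHermitian) :
    Finset.univ.val.map hJ.eigenvalues =
      (0 : ℝ) ::ₘ (c₁ * n) ::ₘ
        (Multiset.replicate (n₀ - 1) ((c₀ - c₁) * n₀ + c₁ * n) +
         Multiset.replicate (n - n₀ - 1) ((c₁ - c₀) * n₀ + c₀ * n)) := by
  have hfirst : #{i : Fin n | (i : ℕ) < n₀} = n₀ := by
    rw [Fin.card_filter_val_lt]; omega
  have hlast : #{i : Fin n | ¬(i : ℕ) < n₀} = n - n₀ := by
    rw [filter_not, card_sdiff_of_subset (filter_subset _ _), hfirst, card_univ, Fintype.card_fin]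
  have hoff' : ∀ i j, i ≠ j → J i j = -blockCoupling (fun i : Fin n => (i : ℕ) < n₀) c₀ c₁ i j := by
    intro i j hij
    rw [hoff i j hij, blockCoupling, of_apply]
    by_cases hi : (i : ℕ) < n₀ <;> by_cases hj : (j : ℕ) < n₀ <;> simp [hi, hj]
  have hroots := hJ.roots_charpoly_eq_eigenvalues
  rw [charpoly_eq_of_blockCoupling _ c₀ c₁ hoff' hrow (by omega) (by omega),
    roots_multiset_prod_X_sub_C, hfirst, hlast, Fintype.card_fin] at hroots
  simp only [RCLike.ofReal_real_eq_id, Function.id_comp] at hroots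
  rw [← hroots, Nat.cast_sub (by omega)]
  congr 4 <;> ring

/-- Exact spectrum of the block Jacobian on the complete graph Kₙ.
J has off-diagonal entries -c₀ within the first n₀ indices and within the last
n - n₀ indices, -c₁ across, and zero row sums. Its eigenvalues, with multiplicity,
are 0 (once), c₁n (once), (c₀-c₁)n₀ + c₁n (n₀ - 1 times) and
(c₁-c₀)n₀ + c₀n (n - n₀ - 1 times). -/
theorem complete_graph_block_spectrum (n n₀ : ℕ)
    (hn : 3 ≤ n) (hn₀ : 1 ≤ n₀) (hn₀' : n₀ ≤ n - 1)
    (c₀ c₁ : ℝ)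
    (J : Matrix (Fin n) (Fin n) ℝ)
    (hoff : ∀ i j : Fin n, i ≠ j →
      J i j = if (i.val < n₀ ∧ j.val < n₀) ∨ (n₀ ≤ i.val ∧ n₀ ≤ j.val)
        then -c₀ else -c₁)
    (hrow : ∀ i : Fin n, ∑ j, J i j = 0)
    (hJ : J.IsHermitian) :
    Finset.univ.val.map hJ.eigenvalues =
      (0 : ℝ) ::ₘ (c₁ * n) ::ₘ
        (Multiset.replicate (n₀ - 1) ((c₀ - c₁) * n₀ + c₁ * n) +
         Multiset.replicate (n - n₀ - 1) ((c₁ - c₀) * n₀ + c₀ * n)) :=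
  complete_graph_block_spectrum_general n n₀ hn₀ hn₀' c₀ c₁ J hoff hrow hJ
end

section
/- Let λ ∈ ℝ and f(y) = λy - y³. Define F₁, F₂, F₃ : ℝ³ → ℝ by F₁(x) = f(x₁-x₂) + f(x₁-x₃), F₂(x) = f(x₂-x₁) + f(x₂-x₃), F₃(x) = f(x₃-x₁) + f(x₃-x₂) (the nonlinear consensus vector field on the triangle graph C₃). Then for all (x₁, x₂, x₃) ∈ ℝ³ the identity (x₂ - x₃)·F₁(x) - (x₁ - x₃)·F₂(x) + (x₁ - x₂)·F₃(x) = 0 holds; consequently, wherever x₁ ≠ x₃, the function H(x) = (x₁ - x₂)/(x₁ - x₃) has zero derivative along the vector field (F₁, F₂, F₃), i.e. H is a first integral of the system. -/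
/-!
Along the vector field `F`, the derivative of `H(x) = (x₁ - x₂)/(x₁ - x₃)` is `∇H · F`, which
is the left side of the identity divided by `(x₁ - x₃)²`. The identity itself is polynomial:
with `a = x₁ - x₂`, `b = x₂ - x₃` and `f` odd, its left side is
`(a + 2b) f(a) + (b - a) f(a + b) - (2a + b) f(b)`, which vanishes for `f(y) = y` and
`f(y) = y³` separately.
-/

/-- The coupling function f(y) = λy - y³. -/
def cf (lam y : ℝ) : ℝ := lam * y - y ^ 3

/-- First component of the consensus vector field on the triangle C₃. -/
def F1 (lam x₁ x₂ x₃ : ℝ) : ℝ := cf lam (x₁ - x₂) + cf lam (x₁ - x₃)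

/-- Second component of the consensus vector field on the triangle C₃. -/
def F2 (lam x₁ x₂ x₃ : ℝ) : ℝ := cf lam (x₂ - x₁) + cf lam (x₂ - x₃)

/-- Third component of the consensus vector field on the triangle C₃. -/
def F3 (lam x₁ x₂ x₃ : ℝ) : ℝ := cf lam (x₃ - x₁) + cf lam (x₃ - x₂)

theorem hasDerivAt_div_sub_along_line {𝕜 : Type*} [NontriviallyNormedField 𝕜]
    (a₁ a₂ a₃ v₁ v₂ v₃ : 𝕜) (h : a₁ ≠ a₃) :
    HasDerivAt (fun t : 𝕜 => ((a₁ + t * v₁) - (a₂ + t * v₂)) / ((a₁ + t * v₁) - (a₃ + t * v₃)))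
      (((a₂ - a₃) * v₁ - (a₁ - a₃) * v₂ + (a₁ - a₂) * v₃) / (a₁ - a₃) ^ 2) 0 := by
  have hline (a v : 𝕜) : HasDerivAt (fun t : 𝕜 => a + t * v) v 0 := by
    simpa using ((hasDerivAt_id (0 : 𝕜)).mul_const v).const_add a
  have hden : (a₁ + 0 * v₁) - (a₃ + 0 * v₃) ≠ 0 := by simpa [sub_eq_zero] using h
  refine (((hline a₁ v₁).sub (hline a₂ v₂)).div
    ((hline a₁ v₁).sub (hline a₃ v₃)) hden).congr_deriv ?_
  simp only [Pi.sub_apply, zero_mul, add_zero]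
  ring

theorem triangle_identity (lam x₁ x₂ x₃ : ℝ) :
    (x₂ - x₃) * F1 lam x₁ x₂ x₃ - (x₁ - x₃) * F2 lam x₁ x₂ x₃
      + (x₁ - x₂) * F3 lam x₁ x₂ x₃ = 0 := by
  simp only [F1, F2, F3, cf]
  ring

/-- The identity (x₂-x₃)F₁ - (x₁-x₃)F₂ + (x₁-x₂)F₃ = 0 holds for the
consensus vector field on C₃ with coupling f(y) = λy - y³; consequently, wherever
x₁ ≠ x₃, the function H(x) = (x₁-x₂)/(x₁-x₃) has zero derivative along the vector
field, i.e. H is a first integral. -/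
theorem triangle_first_integral (lam : ℝ) :
    (∀ x₁ x₂ x₃ : ℝ,
      (x₂ - x₃) * F1 lam x₁ x₂ x₃ - (x₁ - x₃) * F2 lam x₁ x₂ x₃
        + (x₁ - x₂) * F3 lam x₁ x₂ x₃ = 0) ∧
    (∀ x₁ x₂ x₃ : ℝ, x₁ ≠ x₃ →
      HasDerivAt
        (fun t : ℝ =>
          ((x₁ + t * F1 lam x₁ x₂ x₃) - (x₂ + t * F2 lam x₁ x₂ x₃)) /
          ((x₁ + t * F1 lam x₁ x₂ x₃) - (x₃ + t * F3 lam x₁ x₂ x₃)))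
        0 0) := by
  refine ⟨triangle_identity lam, fun x₁ x₂ x₃ h => ?_⟩
  have hH := hasDerivAt_div_sub_along_line x₁ x₂ x₃
    (F1 lam x₁ x₂ x₃) (F2 lam x₁ x₂ x₃) (F3 lam x₁ x₂ x₃) h
  rwa [triangle_identity, zero_div] at hH
end
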